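/- Let r ∈ (1/2, 2/3], φ(x) = exp(−x), and γ as in the counterexample (γ(x) = 1−(x−1)^2 for x<1, γ(x) = 2(x−1)^2+1 for x≥1). For k ≥ 2 let p = (r, 1−r, 0, ..., 0) ∈ Δ^k and let L be the Gamma-Phi loss. Define w^t = (0, 1/t, −t, ..., −t) ∈ R^k. Then lim_{t→∞} C_p(w^t) = C_p^*, while the argmax coordinate of w^t equals 2 for all t ≥ 1, even though p_2 = 1−r < r = max_j p_j. -/

import Mathlib

open Filter Topology

/-- The piecewise quadratic `γ` of the counterexample. -/
noncomputable def γc (x : ℝ) : ℝ := if x < 1 then 1 - (x - 1) ^ 2 else 2 * (x - 1) ^ 2 + 1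

/-- `φ(x) = exp(−x)`. -/
noncomputable def φc (x : ℝ) : ℝ := Real.exp (-x)

/-- The `y`-th component of the Gamma-Phi loss associated to `γ` and `φ`. -/
noncomputable def gammaPhiLoss {k : ℕ} (γ φ : ℝ → ℝ) (v : Fin k → ℝ) (y : Fin k) : ℝ :=
  γ (∑ j ∈ Finset.univ.erase y, φ (v y - v j))

/-- The conditional risk of the Gamma-Phi loss at `p`. -/
noncomputable def condRisk {k : ℕ} (γ φ : ℝ → ℝ) (p v : Fin k → ℝ) : ℝ :=
  ∑ y, p y * gammaPhiLoss γ φ v y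

/-! Since `p` lives on the first two labels, monotonicity of `γ` gives
`C_p(v) ≥ r γ(e^{-a}) + (1 - r) γ(e^{a})` with `a = v₁ - v₂`, and for `1/3 ≤ r ≤ 2/3` this is at
least `γ(1) = 1`: above `1` the branch of `γ` grows twice as fast as it falls below `1`.
Along `w^t` the first two scores merge while the others drift to `-∞`, so both relevant losses
tend to `γ(1) = 1`; hence `C_p^* = 1` is approached, yet the second score stays strictly on top. -/

lemma γc_of_one_le {x : ℝ} (hx : 1 ≤ x) : γc x = 2 * (x - 1) ^ 2 + 1 :=
  if_neg (not_lt.2 hx)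

lemma one_sub_sq_le_γc (x : ℝ) : 1 - (x - 1) ^ 2 ≤ γc x := by
  unfold γc
  split_ifs <;> nlinarith [sq_nonneg (x - 1)]

lemma γc_one : γc 1 = 1 := by norm_num [γc]

lemma monotone_γc : Monotone γc := by
  intro a b hab
  unfold γc
  split_ifs <;> nlinarith

lemma continuous_γc : Continuous γc := by
  have : γc = fun x => 1 - (x - 1) ^ 2 + 3 * max (x - 1) 0 ^ 2 := by
    funext x
    unfold γc
    split_ifs with h
    · rw [max_eq_right (by linarith)]; ring
    · rw [max_eq_left (by linarith)]; ring
  rw [this]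
  fun_prop

lemma φc_pos (x : ℝ) : 0 < φc x := Real.exp_pos _

lemma tendsto_φc_zero : Tendsto φc (𝓝 0) (𝓝 1) := by
  unfold φc
  simpa using (continuous_neg.rexp).tendsto 0

/-- For `y ≥ 1` the lower branch at `y⁻¹` loses at most `(y - 1)²`, while the upper branch at `y`
gains `2 (y - 1)²`. -/
lemma one_le_γc_inv_add_γc {a b y : ℝ} (ha : 0 ≤ a) (hab : a + b = 1) (h2b : a ≤ 2 * b)
    (hy : 1 ≤ y) : 1 ≤ a * γc y⁻¹ + b * γc y := by
  have hinv : (y⁻¹ - 1) ^ 2 ≤ (y - 1) ^ 2 := by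
    have h0 : y⁻¹ ≤ 1 := inv_le_one_of_one_le₀ hy
    have h1 : 1 - y⁻¹ ≤ y - 1 := by
      have : 1 - y⁻¹ = (y - 1) * y⁻¹ := by field_simp
      rw [this]
      exact mul_le_of_le_one_right (by linarith) h0
    nlinarith
  calc (1 : ℝ) ≤ a * (1 - (y - 1) ^ 2) + b * (2 * (y - 1) ^ 2 + 1) := by
        nlinarith [sq_nonneg (y - 1)]
    _ ≤ a * γc y⁻¹ + b * γc y := by
        rw [γc_of_one_le hy]
        gcongr
        linarith [one_sub_sq_le_γc y⁻¹]

lemma one_le_γc_inv_add_γc_of_mem_Icc {r x : ℝ} (hr : r ∈ Set.Icc (1/3 : ℝ) (2/3))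
    (hx : 0 < x) : 1 ≤ r * γc x⁻¹ + (1 - r) * γc x := by
  obtain ⟨hr1, hr2⟩ := hr
  rcases le_or_gt 1 x with hx1 | hx1
  · exact one_le_γc_inv_add_γc (by linarith) (by ring) (by linarith) hx1
  · have := one_le_γc_inv_add_γc (a := 1 - r) (b := r) (y := x⁻¹) (by linarith) (by ring)
      (by linarith) (one_le_inv₀ hx |>.2 hx1.le)
    rw [inv_inv] at this
    linarith

lemma tendsto_sum_φc {ι α : Type*} [DecidableEq ι] {l : Filter α} {s : Finset ι} {i : ι}
    (hi : i ∈ s) {f : α → ι → ℝ} (hfi : Tendsto (fun a => f a i) l (𝓝 0))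
    (hf : ∀ j ∈ s, j ≠ i → Tendsto (fun a => f a j) l atTop) :
    Tendsto (fun a => ∑ j ∈ s, φc (f a j)) l (𝓝 1) := by
  have hterm : ∀ j ∈ s, Tendsto (fun a => φc (f a j)) l (𝓝 (if i = j then 1 else 0)) := by
    intro j hj
    split_ifs with hij
    · subst hij
      exact tendsto_φc_zero.comp hfi
    · exact Real.tendsto_exp_neg_atTop_nhds_zero.comp (hf j hj (Ne.symm hij))
  simpa [Finset.sum_ite_eq, hi] using tendsto_finsetSum s hterm

lemma le_gammaPhiLoss {k : ℕ} {γ φ : ℝ → ℝ} (hγ : Monotone γ) (hφ : ∀ x, 0 ≤ φ x)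
    (v : Fin k → ℝ) {y j : Fin k} (hjy : j ≠ y) : γ (φ (v y - v j)) ≤ gammaPhiLoss γ φ v y :=
  hγ <| Finset.single_le_sum (f := fun i => φ (v y - v i)) (fun _ _ => hφ _)
    (Finset.mem_erase.2 ⟨hjy, Finset.mem_univ j⟩)

lemma tendsto_gammaPhiLoss_γc_φc {k : ℕ} {α : Type*} {l : Filter α} {v : α → Fin k → ℝ}
    {y j : Fin k} (hjy : j ≠ y) (hj : Tendsto (fun a => v a y - v a j) l (𝓝 0))
    (hi : ∀ i, i ≠ y → i ≠ j → Tendsto (fun a => v a y - v a i) l atTop) :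
    Tendsto (fun a => gammaPhiLoss γc φc (v a) y) l (𝓝 1) := by
  have hsum := tendsto_sum_φc (Finset.mem_erase.2 ⟨hjy, Finset.mem_univ j⟩) hj
    fun i hi' hij => hi i (Finset.ne_of_mem_erase hi') hij
  rw [← γc_one]
  exact (continuous_γc.tendsto 1).comp hsum

section TwoLabels

variable {k : ℕ} {p : Fin k → ℝ} {i₀ i₁ : Fin k}

lemma condRisk_eq_of_support_subset_pair (γ φ : ℝ → ℝ) (hne : i₀ ≠ i₁)
    (hp : ∀ i, i ≠ i₀ → i ≠ i₁ → p i = 0) (v : Fin k → ℝ) :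
    condRisk γ φ p v = p i₀ * gammaPhiLoss γ φ v i₀ + p i₁ * gammaPhiLoss γ φ v i₁ := by
  rw [condRisk, ← Finset.sum_pair (f := fun y => p y * gammaPhiLoss γ φ v y) hne]
  refine (Finset.sum_subset (Finset.subset_univ _) fun i _ hi ↦ ?_).symm
  simp only [Finset.mem_insert, Finset.mem_singleton, not_or] at hi
  rw [hp i hi.1 hi.2, zero_mul]

lemma one_le_condRisk {r : ℝ} (hne : i₀ ≠ i₁) (hr : r ∈ Set.Icc (1/3 : ℝ) (2/3))
    (hp₀ : p i₀ = r) (hp₁ : p i₁ = 1 - r) (hp : ∀ i, i ≠ i₀ → i ≠ i₁ → p i = 0)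
    (v : Fin k → ℝ) : 1 ≤ condRisk γc φc p v := by
  have hL₀ := le_gammaPhiLoss monotone_γc (fun x => (φc_pos x).le) v hne.symm
  have hL₁ := le_gammaPhiLoss monotone_γc (fun x => (φc_pos x).le) v hne
  rw [φc, Real.exp_neg] at hL₀
  rw [φc, neg_sub] at hL₁
  set x := Real.exp (v i₀ - v i₁)
  calc (1 : ℝ) ≤ r * γc x⁻¹ + (1 - r) * γc x :=
        one_le_γc_inv_add_γc_of_mem_Icc hr (Real.exp_pos _)
    _ ≤ condRisk γc φc p v := by
        rw [condRisk_eq_of_support_subset_pair γc φc hne hp, hp₀, hp₁]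
        gcongr <;> linarith [hr.1, hr.2]

lemma tendsto_condRisk_γc_φc {α : Type*} {l : Filter α} (hne : i₀ ≠ i₁)
    (hp : ∀ i, i ≠ i₀ → i ≠ i₁ → p i = 0) {v : α → Fin k → ℝ}
    (h₀₁ : Tendsto (fun a => v a i₀ - v a i₁) l (𝓝 0))
    (h₀ : ∀ i, i ≠ i₀ → i ≠ i₁ → Tendsto (fun a => v a i₀ - v a i) l atTop)
    (h₁ : ∀ i, i ≠ i₁ → i ≠ i₀ → Tendsto (fun a => v a i₁ - v a i) l atTop) :
    Tendsto (fun a => condRisk γc φc p (v a)) l (𝓝 (p i₀ + p i₁)) := by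
  have h₁₀ : Tendsto (fun a => v a i₁ - v a i₀) l (𝓝 0) := by
    simpa using h₀₁.neg
  have hL₀ := tendsto_gammaPhiLoss_γc_φc hne.symm h₀₁ h₀
  have hL₁ := tendsto_gammaPhiLoss_γc_φc hne h₁₀ h₁
  simp_rw [condRisk_eq_of_support_subset_pair γc φc hne hp]
  simpa using (hL₀.const_mul (p i₀)).add (hL₁.const_mul (p i₁))

variable {w : ℕ → Fin k → ℝ}

lemma tendsto_condRisk_witness (hne : i₀ ≠ i₁) (hp : ∀ i, i ≠ i₀ → i ≠ i₁ → p i = 0)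
    (hw₀ : ∀ t, w t i₀ = 0) (hw₁ : ∀ t : ℕ, w t i₁ = 1 / t)
    (hw : ∀ t i, i ≠ i₀ → i ≠ i₁ → w t i = -t) :
    Tendsto (fun t => condRisk γc φc p (w t)) atTop (𝓝 (p i₀ + p i₁)) := by
  have hinv : Tendsto (fun t : ℕ => 1 / (t : ℝ)) atTop (𝓝 0) :=
    tendsto_one_div_atTop_nhds_zero_nat
  refine tendsto_condRisk_γc_φc hne hp ?_ (fun i h₀ h₁ => ?_) (fun i h₁ h₀ => ?_)
  · simpa [hw₀, hw₁] using hinv.neg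
  · simpa [hw₀, hw _ i h₀ h₁] using tendsto_natCast_atTop_atTop (R := ℝ)
  · simpa [hw₁, hw _ i h₀ h₁] using hinv.add_atTop tendsto_natCast_atTop_atTop

lemma witness_lt_witness_snd (hw₀ : ∀ t, w t i₀ = 0) (hw₁ : ∀ t : ℕ, w t i₁ = 1 / t)
    (hw : ∀ t i, i ≠ i₀ → i ≠ i₁ → w t i = -t) {t : ℕ} (ht : 1 ≤ t) {j : Fin k}
    (hj : j ≠ i₁) : w t j < w t i₁ := by
  have ht' : (0 : ℝ) < 1 / t := by positivity
  rw [hw₁]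
  by_cases hj₀ : j = i₀
  · rw [hj₀, hw₀]
    exact ht'
  · rw [hw t j hj₀ hj]
    linarith

end TwoLabels

lemma ciInf_eq_of_forall_le_of_tendsto {ι α : Type*} [Nonempty ι] {f : ι → ℝ} {c : ℝ}
    {l : Filter α} [l.NeBot] {w : α → ι} (hle : ∀ i, c ≤ f i)
    (h : Tendsto (fun a => f (w a)) l (𝓝 c)) : ⨅ i, f i = c :=
  le_antisymm (ge_of_tendsto' h fun a => ciInf_le ⟨c, Set.forall_mem_range.2 hle⟩ (w a))
    (le_ciInf hle)

/-- For `p = (r, 1−r, 0, …, 0)` with `r ∈ (1/2, 2/3]` and the counterexample Gamma-Phi loss,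
the sequence `w^t = (0, 1/t, −t, …, −t)` attains the Bayes conditional risk in the limit,
while its argmax coordinate is always the second one, whose probability `1 − r` is not
maximal. -/
theorem counterexample_witness_sequence {k : ℕ} (hk : 2 ≤ k)
    (r : ℝ) (hr : r ∈ Set.Ioc (1/2 : ℝ) (2/3))
    (p : Fin k → ℝ)
    (hp : p = fun i => if i = (⟨0, by omega⟩ : Fin k) then r
      else if i = (⟨1, by omega⟩ : Fin k) then 1 - r else 0)
    (w : ℕ → Fin k → ℝ)
    (hw : w = fun (t : ℕ) (i : Fin k) => if i = (⟨0, by omega⟩ : Fin k) then 0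
      else if i = (⟨1, by omega⟩ : Fin k) then 1 / (t : ℝ) else -(t : ℝ)) :
    Tendsto (fun t => condRisk γc φc p (w t)) atTop
        (𝓝 (⨅ v : Fin k → ℝ, condRisk γc φc p v)) ∧
    (∀ t : ℕ, 1 ≤ t → ∀ j : Fin k, j ≠ (⟨1, by omega⟩ : Fin k) →
      w t j < w t (⟨1, by omega⟩ : Fin k)) ∧
    p (⟨1, by omega⟩ : Fin k) < p (⟨0, by omega⟩ : Fin k) := by
  set i₀ : Fin k := ⟨0, by omega⟩
  set i₁ : Fin k := ⟨1, by omega⟩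
  have hne : i₀ ≠ i₁ := by simp [i₀, i₁]
  have hp₀ : p i₀ = r := by simp [hp]
  have hp₁ : p i₁ = 1 - r := by simp [hp, hne.symm]
  have hp_off : ∀ i, i ≠ i₀ → i ≠ i₁ → p i = 0 := by intro i h₀ h₁; simp [hp, h₀, h₁]
  have hw₀ : ∀ t, w t i₀ = 0 := by simp [hw]
  have hw₁ : ∀ t : ℕ, w t i₁ = 1 / t := by simp [hw, hne.symm]
  have hw_off : ∀ t i, i ≠ i₀ → i ≠ i₁ → w t i = -t := by intro t i h₀ h₁; simp [hw, h₀, h₁]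
  have hrisk : Tendsto (fun t => condRisk γc φc p (w t)) atTop (𝓝 1) := by
    simpa [hp₀, hp₁] using tendsto_condRisk_witness hne hp_off hw₀ hw₁ hw_off
  have hinf : ⨅ v, condRisk γc φc p v = 1 :=
    ciInf_eq_of_forall_le_of_tendsto
      (one_le_condRisk hne ⟨by linarith [hr.1], hr.2⟩ hp₀ hp₁ hp_off) hrisk
  refine ⟨hinf ▸ hrisk, fun t ht j hj => witness_lt_witness_snd hw₀ hw₁ hw_off ht hj, ?_⟩
  rw [hp₀, hp₁]
  linarith [hr.1]
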